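/- arXiv:1102.4177 — 3 statements merged into one kernel-verified Lean document; each statement's English description precedes it below -/
import Mathlib

section
/- The quotient graph of the discrete cactus is a tree: if G° is the graph whose vertices are the equivalence classes of V under d_Cac = 0 and whose edges join pairs of classes at cactus distance 1, then G° contains no nontrivial cycle. -/
open SimpleGraph

/-- The maximum over all paths from `v` to `v'` of the minimum over vertices `a` on the
path of the graph distance `d_gr(ρ, a)`. -/
noncomputable def cacMaxMin {V : Type*} (G : SimpleGraph V) (ρ v v' : V) : ℕ :=
  sSup {m : ℕ | ∃ w : G.Walk v v', ∀ a ∈ w.support, m ≤ G.dist ρ a}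

/-- The cactus pseudo-distance of the pointed graph `(G, ρ)`. -/
noncomputable def dCac {V : Type*} (G : SimpleGraph V) (ρ v v' : V) : ℕ :=
  G.dist ρ v + G.dist ρ v' - 2 * cacMaxMin G ρ v v'

/-!
Call `G.dist ρ v` the height of `v`. Then `dCac u v = 0` says that `u` and `v` have the same
height `h` and are joined by a walk that never goes below height `h`, while `dCac u v = 1` with
`u` not higher than `v` says that `v` is one level above `u` and that they are joined by a walk
never going below the height of `u`. Take a vertex of maximal height on the cycle: its two
neighbours on the cycle are one level below it and are joined through it without going lower,
so they are identified, which contradicts the distinctness of the vertices of the cycle.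
-/

namespace SimpleGraph

variable {V : Type*} {G : SimpleGraph V} {ρ u v w : V} {m m' : ℕ}

def ReachableAbove (G : SimpleGraph V) (ρ : V) (m : ℕ) (v v' : V) : Prop :=
  ∃ w : G.Walk v v', ∀ a ∈ w.support, m ≤ G.dist ρ a

namespace ReachableAbove

lemma refl (h : m ≤ G.dist ρ v) : G.ReachableAbove ρ m v v :=
  ⟨.nil, fun a ha => by rw [Walk.support_nil, List.mem_singleton] at ha; rwa [ha]⟩

lemma symm (h : G.ReachableAbove ρ m u v) : G.ReachableAbove ρ m v u := by
  obtain ⟨w, hw⟩ := h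
  exact ⟨w.reverse, fun a ha => hw a (by rwa [Walk.support_reverse, List.mem_reverse] at ha)⟩

lemma trans (huv : G.ReachableAbove ρ m u v) (hvw : G.ReachableAbove ρ m v w) :
    G.ReachableAbove ρ m u w := by
  obtain ⟨p, hp⟩ := huv
  obtain ⟨q, hq⟩ := hvw
  refine ⟨p.append q, fun a ha => ?_⟩
  rcases (Walk.mem_support_append_iff p q).mp ha with ha | ha
  exacts [hp a ha, hq a ha]

lemma mono (h : G.ReachableAbove ρ m u v) (hm : m' ≤ m) : G.ReachableAbove ρ m' u v := by
  obtain ⟨w, hw⟩ := h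
  exact ⟨w, fun a ha => hm.trans (hw a ha)⟩

lemma le_dist_left (h : G.ReachableAbove ρ m u v) : m ≤ G.dist ρ u := by
  obtain ⟨w, hw⟩ := h
  exact hw u w.start_mem_support

lemma le_cacMaxMin (h : G.ReachableAbove ρ m u v) : m ≤ cacMaxMin G ρ u v :=
  le_csSup ⟨G.dist ρ u, fun _ => le_dist_left⟩ h

end ReachableAbove

lemma cacMaxMin_le_dist_left : cacMaxMin G ρ u v ≤ G.dist ρ u :=
  csSup_le' fun _ => ReachableAbove.le_dist_left

lemma cacMaxMin_comm : cacMaxMin G ρ u v = cacMaxMin G ρ v u := by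
  have hset : {m | G.ReachableAbove ρ m u v} = {m | G.ReachableAbove ρ m v u} :=
    Set.ext fun _ => ⟨ReachableAbove.symm, ReachableAbove.symm⟩
  exact congrArg sSup hset

lemma cacMaxMin_le_dist_right : cacMaxMin G ρ u v ≤ G.dist ρ v :=
  cacMaxMin_comm (G := G) ▸ cacMaxMin_le_dist_left

lemma reachableAbove_cacMaxMin (hG : G.Connected) :
    G.ReachableAbove ρ (cacMaxMin G ρ u v) u v :=
  Nat.sSup_mem (s := {m | G.ReachableAbove ρ m u v})
    ⟨0, (hG.preconnected u v).some, fun _ _ => Nat.zero_le _⟩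
    ⟨G.dist ρ u, fun _ => ReachableAbove.le_dist_left⟩

lemma dCac_comm : dCac G ρ u v = dCac G ρ v u := by
  rw [dCac, dCac, cacMaxMin_comm, Nat.add_comm]

lemma dCac_eq_zero_iff (hG : G.Connected) :
    dCac G ρ u v = 0 ↔ G.dist ρ u = G.dist ρ v ∧ G.ReachableAbove ρ (G.dist ρ u) u v := by
  have hu : cacMaxMin G ρ u v ≤ G.dist ρ u := cacMaxMin_le_dist_left
  have hv : cacMaxMin G ρ u v ≤ G.dist ρ v := cacMaxMin_le_dist_right
  constructor
  · intro h
    have hmax : G.dist ρ u = cacMaxMin G ρ u v := by unfold dCac at h; omega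
    exact ⟨by unfold dCac at h; omega, hmax ▸ reachableAbove_cacMaxMin hG⟩
  · rintro ⟨hdist, hreach⟩
    have := hreach.le_cacMaxMin
    unfold dCac
    omega

lemma dCac_self (hG : G.Connected) : dCac G ρ v v = 0 :=
  (dCac_eq_zero_iff hG).2 ⟨rfl, .refl le_rfl⟩

lemma dCac_eq_zero_trans (hG : G.Connected) (huv : dCac G ρ u v = 0) (hvw : dCac G ρ v w = 0) :
    dCac G ρ u w = 0 := by
  obtain ⟨hdist_uv, hreach_uv⟩ := (dCac_eq_zero_iff hG).1 huv
  obtain ⟨hdist_vw, hreach_vw⟩ := (dCac_eq_zero_iff hG).1 hvw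
  exact (dCac_eq_zero_iff hG).2 ⟨hdist_uv.trans hdist_vw, hreach_uv.trans (hdist_uv ▸ hreach_vw)⟩

lemma dist_succ_and_reachableAbove_of_dCac_eq_one (hG : G.Connected) (h : dCac G ρ u v = 1)
    (hle : G.dist ρ u ≤ G.dist ρ v) :
    G.dist ρ u + 1 = G.dist ρ v ∧ G.ReachableAbove ρ (G.dist ρ u) u v := by
  have hu : cacMaxMin G ρ u v ≤ G.dist ρ u := cacMaxMin_le_dist_left
  have hv : cacMaxMin G ρ u v ≤ G.dist ρ v := cacMaxMin_le_dist_right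
  unfold dCac at h
  have hmax : G.dist ρ u = cacMaxMin G ρ u v := by omega
  exact ⟨by omega, hmax ▸ reachableAbove_cacMaxMin hG⟩

lemma dCac_eq_zero_of_peak {v' : V} (hG : G.Connected) (huv : dCac G ρ u v = 1)
    (hvv' : dCac G ρ v v' = 0) (hv'w : dCac G ρ v' w = 1)
    (hu : G.dist ρ u ≤ G.dist ρ v) (hw : G.dist ρ w ≤ G.dist ρ v') : dCac G ρ u w = 0 := by
  obtain ⟨hdist_vv', hreach_vv'⟩ := (dCac_eq_zero_iff hG).1 hvv'
  obtain ⟨hsucc_u, hreach_uv⟩ := dist_succ_and_reachableAbove_of_dCac_eq_one hG huv hu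
  obtain ⟨hsucc_w, hreach_wv'⟩ :=
    dist_succ_and_reachableAbove_of_dCac_eq_one hG (dCac_comm.trans hv'w) hw
  have hdist_uw : G.dist ρ u = G.dist ρ w := by omega
  refine (dCac_eq_zero_iff hG).2 ⟨hdist_uw, hreach_uv.trans ?_⟩
  exact (hreach_vv'.mono (by omega)).trans (hdist_uw ▸ hreach_wv'.symm)

end SimpleGraph

theorem stmt5_general {V : Type*} (G : SimpleGraph V) (hG : G.Connected) (ρ : V) :
    ¬ ∃ (n : ℕ) (x : ℕ → V), 3 ≤ n ∧
      dCac G ρ (x 0) (x n) = 0 ∧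
      (∀ i < n, dCac G ρ (x i) (x (i + 1)) = 1) ∧
      (∀ i j, i < j → j < n → dCac G ρ (x i) (x j) ≠ 0) := by
  rintro ⟨n, x, hn, hcycle, hstep, hdistinct⟩
  obtain ⟨i, hi, hmax⟩ := Finset.exists_max_image (Finset.range (n + 1))
    (fun j => G.dist ρ (x j)) ⟨0, by simp⟩
  have hmax' (j : ℕ) (hj : j ≤ n) : G.dist ρ (x j) ≤ G.dist ρ (x i) :=
    hmax j (Finset.mem_range.mpr (by omega))
  have hdist_0n := ((dCac_eq_zero_iff hG).1 hcycle).1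
  by_cases hpeak_0 : G.dist ρ (x i) ≤ G.dist ρ (x 0)
  · have hlast := hstep (n - 1) (by omega)
    rw [Nat.sub_add_cancel (by omega)] at hlast
    refine hdistinct 1 (n - 1) (by omega) (by omega) (dCac_eq_zero_of_peak hG
      (dCac_comm.trans (hstep 0 (by omega))) hcycle (dCac_comm.trans hlast) ?_ ?_)
    · exact (hmax' 1 (by omega)).trans hpeak_0
    · exact (hmax' (n - 1) (by omega)).trans (hdist_0n ▸ hpeak_0)
  · have hi0 : i ≠ 0 := by rintro rfl; exact hpeak_0 le_rfl
    obtain ⟨j, rfl⟩ : ∃ j, i = j + 1 := ⟨i - 1, by omega⟩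
    have hj : j + 1 < n := by
      rw [Finset.mem_range] at hi
      by_contra hjn
      exact hpeak_0 (by rw [show j + 1 = n by omega, hdist_0n])
    have hpeak := dCac_eq_zero_of_peak hG (hstep j (by omega)) (dCac_self hG)
      (hstep (j + 1) hj) (hmax' j (by omega)) (hmax' (j + 2) (by omega))
    rcases Nat.lt_or_ge (j + 2) n with hlt | hge
    · exact hdistinct j (j + 2) (by omega) hlt hpeak
    · obtain rfl : n = j + 2 := by omega
      exact hdistinct 0 j (by omega) (by omega)
        (dCac_eq_zero_trans hG hcycle (dCac_comm.trans hpeak))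

/-- The graph  on the quotient `Cac(G) = V / {d_Cac = 0}`, whose edges are the pairs
of classes at cactus distance 1, contains no nontrivial cycle (it is a tree). -/
theorem stmt5 {V : Type*} [Fintype V] (G : SimpleGraph V) (hG : G.Connected) (ρ : V) :
    ¬ ∃ (n : ℕ) (x : ℕ → V), 3 ≤ n ∧
      dCac G ρ (x 0) (x n) = 0 ∧
      (∀ i < n, dCac G ρ (x i) (x (i + 1)) = 1) ∧
      (∀ i j, i < j → j < n → dCac G ρ (x i) (x j) ≠ 0) :=
  stmt5_general G hG ρ
end

section
/- The continuous cactus construction is 6-Lipschitz with respect to the Gromov-Hausdorff distance: for any two pointed compact geodesic metric spaces E and E', d_GH(Kac(E), Kac(E')) ≤ 6·d_GH(E, E'). -/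
/-!
Fix a correspondence `R` of metric distortion `ε`. A curve from `a'` to `b'` in `E'` is cut
into points at mutual distance `< δ`, these are lifted to `E` through `R` (keeping `a` and `b`
at the ends) and consecutive lifts, now at distance `≤ δ + ε`, are joined by geodesic segments.
Every point of the resulting curve from `a` to `b` lies within `δ + ε` of a lift, whose
distance to `ρ` is within `ε` of the corresponding distance to `ρ'`; so the sup-inf terms of
`d_Kac` differ by at most `2ε`, the terms `d(ρ, a)`, `d(ρ, b)` by at most `ε` each, and the
distortion of `R` for `d_Kac` is at most `6ε`.
-/

/-- `E` is a geodesic space: any two points are joined by an isometric path. -/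
def IsGeodesicSpace (E : Type*) [MetricSpace E] : Prop :=
  ∀ a b : E, ∃ γ : ℝ → E, γ 0 = a ∧ γ (dist a b) = b ∧
    ∀ s ∈ Set.Icc (0 : ℝ) (dist a b), ∀ t ∈ Set.Icc (0 : ℝ) (dist a b),
      dist (γ s) (γ t) = |s - t|

/-- The continuous cactus pseudo-distance associated with the pointed space `(E, ρ)`:
`d_Kac(a, b) = d(ρ,a) + d(ρ,b) - 2 sup_γ inf_t d(ρ, γ(t))`, the supremum being over all
continuous curves `γ : [0,1] → E` from `a` to `b`. -/
noncomputable def dKac {E : Type*} [MetricSpace E] (ρ a b : E) : ℝ :=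
  dist ρ a + dist ρ b -
    2 * sSup {m : ℝ | ∃ γ : ℝ → E, ContinuousOn γ (Set.Icc 0 1) ∧ γ 0 = a ∧ γ 1 = b ∧
      m = ⨅ t : Set.Icc (0 : ℝ) 1, dist ρ (γ t)}


/-- A correspondence between the pointed sets `(X, ρ)` and `(Y, ρ')`. -/
def IsCorrespondence {X Y : Type*} (ρ : X) (ρ' : Y) (R : Set (X × Y)) : Prop :=
  (ρ, ρ') ∈ R ∧ (∀ x : X, ∃ y : Y, (x, y) ∈ R) ∧ (∀ y : Y, ∃ x : X, (x, y) ∈ R)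

/-- The distortion of a correspondence `R` with respect to the (pseudo-)distances
`dX` and `dY`. -/
noncomputable def distortion {X Y : Type*} (dX : X → X → ℝ) (dY : Y → Y → ℝ)
    (R : Set (X × Y)) : ℝ :=
  sSup {r : ℝ | ∃ p ∈ R, ∃ q ∈ R, r = |dX p.1 q.1 - dY p.2 q.2|}

/-- The pointed Gromov–Hausdorff distance between the quotient metric spaces of the
pseudo-distances `dX`, `dY`, expressed as half the infimum of distortions of
correspondences containing the pair of base points. -/
noncomputable def ghDistCorr {X Y : Type*} (dX : X → X → ℝ) (dY : Y → Y → ℝ)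
    (ρ : X) (ρ' : Y) : ℝ :=
  sInf {D : ℝ | ∃ R : Set (X × Y), IsCorrespondence ρ ρ' R ∧ D = distortion dX dY R} / 2

open Set

section Geodesic

variable {E : Type*} [MetricSpace E]

theorem IsGeodesicSpace.exists_path_dist_le (hgeo : IsGeodesicSpace E) (a b : E) :
    ∃ γ : Path a b, ∀ t, dist (γ t) a ≤ dist a b := by
  obtain ⟨g, hg0, hgd, hiso⟩ := hgeo a b
  set d := dist a b
  have hd : 0 ≤ d := dist_nonneg
  have hmem : ∀ t : unitInterval, d * t ∈ Icc 0 d := fun t =>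
    ⟨mul_nonneg hd t.2.1, mul_le_of_le_one_right hd t.2.2⟩
  have hg : ContinuousOn g (Icc 0 d) :=
    (LipschitzOnWith.of_dist_le_mul (K := 1) fun x hx y hy => by
      simp [hiso x hx y hy, Real.dist_eq]).continuousOn
  refine ⟨⟨⟨fun t => g (d * t), hg.comp_continuous (by fun_prop) hmem⟩,
    by simp [hg0], by simp [hgd]⟩, fun t => ?_⟩
  change dist (g (d * t)) a ≤ d
  rw [← hg0, hiso _ (hmem t) 0 ⟨le_rfl, hd⟩, sub_zero, abs_of_nonneg (hmem t).1]
  exact (hmem t).2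

theorem IsGeodesicSpace.exists_path_of_chain (hgeo : IsGeodesicSpace E) (p : ℕ → E)
    {C : ℝ} (hC : 0 ≤ C) (n : ℕ) (hstep : ∀ i < n, dist (p i) (p (i + 1)) ≤ C) :
    ∃ γ : Path (p 0) (p n), ∀ t, ∃ i ≤ n, dist (γ t) (p i) ≤ C := by
  induction n with
  | zero => exact ⟨Path.refl _, fun _ => ⟨0, le_rfl, by simpa using hC⟩⟩
  | succ n ih =>
    obtain ⟨γ, hγ⟩ := ih fun i hi => hstep i (Nat.lt_succ_of_lt hi)
    obtain ⟨σ, hσ⟩ := hgeo.exists_path_dist_le (p n) (p (n + 1))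
    refine ⟨γ.trans σ, fun t => ?_⟩
    rcases (γ.trans_range σ).subset (mem_range_self t) with ⟨s, hs⟩ | ⟨s, hs⟩
    · obtain ⟨i, hi, hdist⟩ := hγ s
      exact ⟨i, hi.trans n.le_succ, hs ▸ hdist⟩
    · exact ⟨n, n.le_succ, hs ▸ (hσ s).trans (hstep n n.lt_succ_self)⟩

end Geodesic

theorem ContinuousOn.exists_fine_subdivision {X : Type*} [PseudoMetricSpace X] {γ : ℝ → X}
    (hγ : ContinuousOn γ (Icc 0 1)) {δ : ℝ} (hδ : 0 < δ) :
    ∃ N : ℕ, 0 < N ∧ ∀ i < N, dist (γ (i / N)) (γ ((i + 1 : ℕ) / N)) < δ := by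
  obtain ⟨η, hη, hγη⟩ :=
    Metric.uniformContinuousOn_iff.1 (isCompact_Icc.uniformContinuousOn_of_continuous hγ) δ hδ
  obtain ⟨n, hn⟩ := exists_nat_one_div_lt hη
  have hN : (0 : ℝ) < (n + 1 : ℕ) := by positivity
  refine ⟨n + 1, n.succ_pos, fun i hi => hγη _ ?_ _ ?_ ?_⟩
  · exact ⟨by positivity, (div_le_one hN).2 (by exact_mod_cast hi.le)⟩
  · exact ⟨by positivity, (div_le_one hN).2 (by exact_mod_cast hi)⟩
  · rw [Real.dist_eq, ← sub_div, abs_div, Nat.cast_succ i, sub_add_cancel_left, abs_neg,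
      abs_one, abs_of_pos hN]
    exact_mod_cast hn

theorem exists_lift_chain {α β : Type*} {r : α → β → Prop} (hsurj : ∀ y, ∃ x, r x y)
    (x : ℕ → β) {N : ℕ} (hN : 0 < N) {a b : α} (ha : r a (x 0)) (hb : r b (x N)) :
    ∃ p : ℕ → α, p 0 = a ∧ p N = b ∧ ∀ i, r (p i) (x i) := by
  classical
  choose f hf using hsurj
  refine ⟨fun i => if i = 0 then a else if i = N then b else f (x i), by simp,
    by simp [hN.ne'], fun i => ?_⟩
  dsimp only
  split_ifs with h0 hN'
  · exact h0 ▸ ha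
  · exact hN' ▸ hb
  · exact hf _

section Kac

variable {E E' : Type*} [MetricSpace E] [MetricSpace E']

def curveMinDists (ρ a b : E) : Set ℝ :=
  {m : ℝ | ∃ γ : ℝ → E, ContinuousOn γ (Icc 0 1) ∧ γ 0 = a ∧ γ 1 = b ∧
    m = ⨅ t : Icc (0 : ℝ) 1, dist ρ (γ t)}

theorem dKac_eq (ρ a b : E) :
    dKac ρ a b = dist ρ a + dist ρ b - 2 * sSup (curveMinDists ρ a b) := rfl

theorem iInf_dist_le (ρ : E) (γ : ℝ → E) {s : ℝ} (hs : s ∈ Icc (0 : ℝ) 1) :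
    ⨅ t : Icc (0 : ℝ) 1, dist ρ (γ t) ≤ dist ρ (γ s) :=
  ciInf_le (f := fun t : Icc (0 : ℝ) 1 => dist ρ (γ t))
    ⟨0, by rintro _ ⟨t, rfl⟩; exact dist_nonneg⟩ ⟨s, hs⟩

theorem bddAbove_curveMinDists (ρ a b : E) : BddAbove (curveMinDists ρ a b) :=
  ⟨dist ρ a, by
    rintro _ ⟨γ, -, hγ0, -, rfl⟩
    simpa [hγ0] using iInf_dist_le ρ γ (left_mem_Icc.2 zero_le_one)⟩

theorem sSup_curveMinDists_nonneg (ρ a b : E) : 0 ≤ sSup (curveMinDists ρ a b) :=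
  Real.sSup_nonneg <| by
    rintro _ ⟨γ, -, -, -, rfl⟩
    exact Real.iInf_nonneg fun _ => dist_nonneg

variable {ρ a b : E} {ρ' a' b' : E'} {r : E → E' → Prop} {ε : ℝ}

theorem exists_mem_curveMinDists_ge (hgeo : IsGeodesicSpace E)
    (hρ : r ρ ρ') (ha : r a a') (hb : r b b') (hsurj : ∀ y, ∃ x, r x y)
    (hdis : ∀ x u y v, r x y → r u v → |dist x u - dist y v| ≤ ε)
    {γ' : ℝ → E'} (hγ' : ContinuousOn γ' (Icc 0 1)) (hγ'0 : γ' 0 = a') (hγ'1 : γ' 1 = b')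
    {δ : ℝ} (hδ : 0 < δ) :
    ∃ m ∈ curveMinDists ρ a b, (⨅ t : Icc (0 : ℝ) 1, dist ρ' (γ' t)) - 2 * ε - δ ≤ m := by
  have hε : 0 ≤ ε := by simpa using hdis ρ ρ ρ' ρ' hρ hρ
  obtain ⟨N, hN, hfine⟩ := hγ'.exists_fine_subdivision hδ
  set x : ℕ → E' := fun i => γ' (i / N)
  have hmem : ∀ i ≤ N, (i / N : ℝ) ∈ Icc (0 : ℝ) 1 := fun i hi =>
    ⟨by positivity, div_le_one_of_le₀ (by exact_mod_cast hi) (Nat.cast_nonneg N)⟩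
  obtain ⟨p, hp0, hpN, hpx⟩ := exists_lift_chain hsurj x hN (by simpa [x, hγ'0] using ha)
    (by simpa [x, hN.ne', hγ'1] using hb)
  have hstep : ∀ i < N, dist (p i) (p (i + 1)) ≤ δ + ε := fun i hi => by
    have := hdis _ _ _ _ (hpx i) (hpx (i + 1))
    have := hfine i hi
    rw [abs_le] at *
    linarith
  obtain ⟨γ, hγ⟩ := hgeo.exists_path_of_chain p (by linarith) N hstep
  subst hp0 hpN
  refine ⟨_, ⟨γ.extend, γ.continuous_extend.continuousOn, γ.extend_zero, γ.extend_one, rfl⟩,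
    le_ciInf fun t => ?_⟩
  obtain ⟨i, hi, hγi⟩ := hγ t
  have hlift := abs_le.1 (hdis _ _ _ _ hρ (hpx i))
  have hmin := iInf_dist_le ρ' γ' (hmem i hi)
  have := dist_triangle ρ (γ t) (p i)
  rw [γ.extend_extends']
  linarith

theorem sSup_curveMinDists_le_add (hgeo : IsGeodesicSpace E)
    (hρ : r ρ ρ') (ha : r a a') (hb : r b b') (hsurj : ∀ y, ∃ x, r x y)
    (hdis : ∀ x u y v, r x y → r u v → |dist x u - dist y v| ≤ ε) :
    sSup (curveMinDists ρ' a' b') ≤ sSup (curveMinDists ρ a b) + 2 * ε := by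
  have hε : 0 ≤ ε := by simpa using hdis ρ ρ ρ' ρ' hρ hρ
  refine Real.sSup_le ?_ (by linarith [sSup_curveMinDists_nonneg ρ a b])
  rintro _ ⟨γ', hγ', hγ'0, hγ'1, rfl⟩
  refine le_of_forall_pos_le_add fun δ hδ => ?_
  obtain ⟨m, hm, hle⟩ :=
    exists_mem_curveMinDists_ge hgeo hρ ha hb hsurj hdis hγ' hγ'0 hγ'1 hδ
  linarith [le_csSup (bddAbove_curveMinDists ρ a b) hm]

theorem dKac_le_dKac_add (hgeo : IsGeodesicSpace E)
    (hρ : r ρ ρ') (ha : r a a') (hb : r b b') (hsurj : ∀ y, ∃ x, r x y)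
    (hdis : ∀ x u y v, r x y → r u v → |dist x u - dist y v| ≤ ε) :
    dKac ρ a b ≤ dKac ρ' a' b' + 6 * ε := by
  have hsup := sSup_curveMinDists_le_add hgeo hρ ha hb hsurj hdis
  have hda := abs_le.1 (hdis _ _ _ _ hρ ha)
  have hdb := abs_le.1 (hdis _ _ _ _ hρ hb)
  rw [dKac_eq, dKac_eq]
  linarith

end Kac

section Distortion

variable {X Y : Type*}

theorem distortion_nonneg (dX : X → X → ℝ) (dY : Y → Y → ℝ) (R : Set (X × Y)) :
    0 ≤ distortion dX dY R :=
  Real.sSup_nonneg <| by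
    rintro _ ⟨p, -, q, -, rfl⟩
    exact abs_nonneg _

theorem distortion_le {dX : X → X → ℝ} {dY : Y → Y → ℝ} {R : Set (X × Y)} {c : ℝ}
    (hR : R.Nonempty) (h : ∀ p ∈ R, ∀ q ∈ R, |dX p.1 q.1 - dY p.2 q.2| ≤ c) :
    distortion dX dY R ≤ c := by
  obtain ⟨p, hp⟩ := hR
  refine csSup_le ⟨_, p, hp, p, hp, rfl⟩ ?_
  rintro _ ⟨p, hp, q, hq, rfl⟩
  exact h p hp q hq

theorem abs_dist_sub_dist_le_distortion [PseudoMetricSpace X] [PseudoMetricSpace Y]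
    [BoundedSpace X] [BoundedSpace Y] {R : Set (X × Y)} {x u : X} {y v : Y}
    (hxy : (x, y) ∈ R) (huv : (u, v) ∈ R) :
    |dist x u - dist y v| ≤ distortion (fun a b : X => dist a b) (fun a b : Y => dist a b) R := by
  refine le_csSup ⟨Metric.diam (univ : Set X) + Metric.diam (univ : Set Y), ?_⟩
    ⟨_, hxy, _, huv, rfl⟩
  rintro _ ⟨p, -, q, -, rfl⟩
  have hX := Metric.dist_le_diam_of_mem (Bornology.isBounded_univ.2 ‹_›)
    (mem_univ p.1) (mem_univ q.1)
  have hY := Metric.dist_le_diam_of_mem (Bornology.isBounded_univ.2 ‹_›)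
    (mem_univ p.2) (mem_univ q.2)
  rw [abs_le]
  constructor <;> linarith [dist_nonneg (x := p.1) (y := q.1), dist_nonneg (x := p.2) (y := q.2)]

theorem distortion_dKac_le [MetricSpace X] [MetricSpace Y] [BoundedSpace X] [BoundedSpace Y]
    (hgeoX : IsGeodesicSpace X) (hgeoY : IsGeodesicSpace Y) {ρ : X} {ρ' : Y}
    {R : Set (X × Y)} (hR : IsCorrespondence ρ ρ' R) :
    distortion (dKac ρ) (dKac ρ') R ≤
      6 * distortion (fun a b : X => dist a b) (fun a b : Y => dist a b) R := by
  obtain ⟨hρ, hX, hY⟩ := hR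
  refine distortion_le ⟨_, hρ⟩ fun p hp q hq => abs_le.2 ⟨?_, ?_⟩
  · have := dKac_le_dKac_add (r := fun y x => (x, y) ∈ R) hgeoY hρ hp hq hX
      fun y v x u hxy huv => abs_sub_comm (dist y v) _ ▸ abs_dist_sub_dist_le_distortion hxy huv
    linarith
  · have := dKac_le_dKac_add (r := fun x y => (x, y) ∈ R) hgeoX hρ hp hq hY
      fun x u y v => abs_dist_sub_dist_le_distortion
    linarith

theorem ghDistCorr_le_mul {dX dX' : X → X → ℝ} {dY dY' : Y → Y → ℝ} {ρ : X} {ρ' : Y}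
    {c : ℝ} (hc : 0 ≤ c)
    (h : ∀ R, IsCorrespondence ρ ρ' R → distortion dX' dY' R ≤ c * distortion dX dY R) :
    ghDistCorr dX' dY' ρ ρ' ≤ c * ghDistCorr dX dY ρ ρ' := by
  have huniv : IsCorrespondence ρ ρ' univ :=
    ⟨mem_univ _, fun _ => ⟨ρ', mem_univ _⟩, fun _ => ⟨ρ, mem_univ _⟩⟩
  rw [ghDistCorr, ghDistCorr, ← mul_div_assoc, ← smul_eq_mul, ← Real.sInf_smul_of_nonneg hc]
  refine div_le_div_of_nonneg_right (le_csInf ⟨_, _, ⟨univ, huniv, rfl⟩, rfl⟩ ?_) zero_le_two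
  have hbdd : BddBelow {D | ∃ R, IsCorrespondence ρ ρ' R ∧ D = distortion dX' dY' R} :=
    ⟨0, by rintro _ ⟨R, -, rfl⟩; exact distortion_nonneg _ _ R⟩
  rintro _ ⟨_, ⟨R, hR, rfl⟩, rfl⟩
  exact (csInf_le hbdd ⟨R, hR, rfl⟩).trans (h R hR)

end Distortion

/-- The continuous cactus is 6-Lipschitz for the pointed Gromov–Hausdorff distance:
`d_GH(Kac(E), Kac(E')) ≤ 6 d_GH(E, E')`, where the Gromov–Hausdorff distances are
expressed via correspondences and the cactus spaces via their pseudo-distances. -/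
theorem stmt8 {E E' : Type*} [MetricSpace E] [CompactSpace E]
    [MetricSpace E'] [CompactSpace E']
    (hgeo : IsGeodesicSpace E) (hgeo' : IsGeodesicSpace E') (ρ : E) (ρ' : E') :
    ghDistCorr (dKac ρ) (dKac ρ') ρ ρ' ≤
      6 * ghDistCorr (fun a b : E => dist a b) (fun a b : E' => dist a b) ρ ρ' :=
  ghDistCorr_le_mul (by norm_num) fun _ hR => distortion_dKac_le hgeo hgeo' hR
end

section
/- For a pointed compact geodesic metric space E, the space Kac'(E) of connected components of complements of open balls around ρ, equipped with d_{Kac'}(C, C') = h(C) + h(C') - 2h(C ∧ C'), is isometric to the continuous cactus Kac(E) via the map sending x ∈ E to the connected component of B(ρ, d(ρ,x))^c containing x. -/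
/-- For `x, y ∈ E`, the height `h(C_x ∧ C_y)` of the infimum of the components `C_x`, `C_y`
in the tree `Kac'(E)`: the maximal `r ≥ 0` such that `x` and `y` lie in the same connected
component of the complement of the open ball `B(ρ, r)`. -/
noncomputable def hMeet {E : Type*} [MetricSpace E] (ρ x y : E) : ℝ :=
  sSup {r : ℝ | 0 ≤ r ∧ y ∈ connectedComponentIn (Metric.ball ρ r)ᶜ x}

/-! A path from `x` to `y` staying outside `B(ρ, m)` shows that `x` and `y` lie in one component
of `B(ρ, m)ᶜ`. Conversely, in a geodesic space two points of a connected set are joined, through a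
chain of short geodesics, by a path inside any `ε`-thickening of that set, and the `ε`-thickening
of `B(ρ, r)ᶜ` avoids `B(ρ, r - ε)`. Hence the supremum in `d_Kac` is the meeting height `hMeet`.
Surjectivity: a component `C` of `B(ρ, r)ᶜ` is compact, and its point `x` closest to `ρ` has
`C_x = C`. -/

open Metric Set

theorem IsClosed.connectedComponentIn {X : Type*} [TopologicalSpace X] {F : Set X}
    (hF : IsClosed F) (x : X) : IsClosed (connectedComponentIn F x) := by
  by_cases hx : x ∈ F
  · refine isClosed_of_closure_subset ?_
    exact isPreconnected_connectedComponentIn.closure.subset_connectedComponentIn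
      (subset_closure (mem_connectedComponentIn hx))
      (closure_minimal (connectedComponentIn_subset F x) hF)
  · rw [connectedComponentIn_eq_empty hx]
    exact isClosed_empty

namespace IsGeodesicSpace

variable {E : Type*} [MetricSpace E]

theorem joinedIn_of_closedBall_subset (hgeo : IsGeodesicSpace E) {S : Set E} {a b : E}
    (hS : closedBall a (dist a b) ⊆ S) : JoinedIn S a b := by
  obtain ⟨γ, hγa, hγb, hiso⟩ := hgeo a b
  have hγ : ContinuousOn γ (Icc 0 (dist a b)) :=
    (LipschitzOnWith.of_dist_le_mul (K := 1) fun s hs t ht => by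
      rw [hiso s hs t ht, NNReal.coe_one, one_mul, Real.dist_eq]).continuousOn
  have himage : γ '' Icc 0 (dist a b) ⊆ closedBall a (dist a b) := by
    rintro _ ⟨s, hs, rfl⟩
    have hdist := hiso s hs 0 (left_mem_Icc.2 dist_nonneg)
    rw [hγa, sub_zero, abs_of_nonneg hs.1] at hdist
    exact mem_closedBall.2 (hdist.trans_le hs.2)
  have hpath : IsPathConnected (γ '' Icc 0 (dist a b)) :=
    ((convex_Icc 0 _).isPathConnected (nonempty_Icc.2 dist_nonneg)).image' hγ
  exact (hpath.joinedIn a ⟨0, left_mem_Icc.2 dist_nonneg, hγa⟩ b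
    ⟨_, right_mem_Icc.2 dist_nonneg, hγb⟩).mono (himage.trans hS)

theorem joinedIn_thickening_of_mem_connectedComponentIn (hgeo : IsGeodesicSpace E)
    {F : Set E} {x y : E} {ε : ℝ} (hε : 0 < ε) (hy : y ∈ connectedComponentIn F x) :
    JoinedIn (thickening ε F) x y := by
  have hx : x ∈ connectedComponentIn F x :=
    mem_connectedComponentIn (connectedComponentIn_nonempty_iff.1 ⟨y, hy⟩)
  refine isPreconnected_connectedComponentIn.induction₂' (JoinedIn (thickening ε F))
    (fun a ha => ?_) (fun _ _ _ _ _ _ => JoinedIn.trans) hx hy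
  have hball : ball a ε ⊆ thickening ε F :=
    ball_subset_thickening (connectedComponentIn_subset F x ha) ε
  filter_upwards [nhdsWithin_le_nhds (ball_mem_nhds a hε)] with b hb
  have hab :=
    hgeo.joinedIn_of_closedBall_subset ((closedBall_subset_ball (mem_ball'.1 hb)).trans hball)
  exact ⟨hab, hab.symm⟩

end IsGeodesicSpace

section Cactus

variable {E : Type*} [MetricSpace E]

theorem sub_lt_dist_of_mem_thickening_compl_ball {ρ w : E} {r ε : ℝ}
    (hw : w ∈ thickening ε (ball ρ r)ᶜ) : r - ε < dist ρ w := by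
  obtain ⟨z, hz, hwz⟩ := mem_thickening_iff.1 hw
  have hrz : r ≤ dist ρ z := by simpa [dist_comm] using hz
  linarith [dist_triangle ρ w z]

def sharedComponentRadii (ρ a b : E) : Set ℝ :=
  {r : ℝ | 0 ≤ r ∧ b ∈ connectedComponentIn (ball ρ r)ᶜ a}

def curveInfDists (ρ a b : E) : Set ℝ :=
  {m : ℝ | ∃ γ : ℝ → E, ContinuousOn γ (Icc 0 1) ∧ γ 0 = a ∧ γ 1 = b ∧
    m = ⨅ t : Icc (0 : ℝ) 1, dist ρ (γ t)}

theorem bddAbove_sharedComponentRadii (ρ a b : E) : BddAbove (sharedComponentRadii ρ a b) := by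
  refine ⟨dist ρ a, fun r hr => ?_⟩
  have ha : a ∈ (ball ρ r)ᶜ := connectedComponentIn_nonempty_iff.1 ⟨b, hr.2⟩
  simpa [dist_comm] using ha

theorem curveInfDists_subset_sharedComponentRadii (ρ a b : E) :
    curveInfDists ρ a b ⊆ sharedComponentRadii ρ a b := by
  rintro _ ⟨γ, hγ, rfl, rfl, rfl⟩
  refine ⟨Real.iInf_nonneg fun _ => dist_nonneg, ?_⟩
  have himage : γ '' Icc 0 1 ⊆ (ball ρ (⨅ t : Icc (0 : ℝ) 1, dist ρ (γ t)))ᶜ := by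
    rintro _ ⟨t, ht, rfl⟩
    simpa [dist_comm] using
      ciInf_le ⟨0, by rintro _ ⟨s, rfl⟩; exact dist_nonneg⟩ (⟨t, ht⟩ : Icc (0 : ℝ) 1)
  exact (isPreconnected_Icc.image γ hγ).subset_connectedComponentIn
    (mem_image_of_mem γ (left_mem_Icc.2 zero_le_one)) himage
    (mem_image_of_mem γ (right_mem_Icc.2 zero_le_one))

theorem exists_mem_curveInfDists_of_joinedIn {S : Set E} {ρ a b : E} {c : ℝ}
    (h : JoinedIn S a b) (hc : ∀ w ∈ S, c ≤ dist ρ w) : ∃ m ∈ curveInfDists ρ a b, c ≤ m := by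
  obtain ⟨p, hp⟩ := h
  refine ⟨_, ⟨p.extend, p.continuous_extend.continuousOn, p.extend_zero, p.extend_one, rfl⟩, ?_⟩
  exact le_ciInf fun t => by rw [p.extend_extends']; exact hc _ (hp t)

theorem hMeet_eq_sSup_curveInfDists (hgeo : IsGeodesicSpace E) (ρ a b : E) :
    hMeet ρ a b = sSup (curveInfDists ρ a b) := by
  have hsub := curveInfDists_subset_sharedComponentRadii ρ a b
  have hbdd := bddAbove_sharedComponentRadii ρ a b
  obtain ⟨m, hm, -⟩ := exists_mem_curveInfDists_of_joinedIn (ρ := ρ) (c := 0)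
    (hgeo.joinedIn_of_closedBall_subset (subset_univ _)) fun w _ => dist_nonneg
  refine le_antisymm (csSup_le ⟨m, hsub hm⟩ fun r hr => ?_) (csSup_le_csSup hbdd ⟨m, hm⟩ hsub)
  refine le_of_forall_sub_le fun ε hε => ?_
  obtain ⟨m', hm', hrm'⟩ := exists_mem_curveInfDists_of_joinedIn
    (hgeo.joinedIn_thickening_of_mem_connectedComponentIn hε hr.2)
    fun w hw => (sub_lt_dist_of_mem_thickening_compl_ball hw).le
  exact hrm'.trans (le_csSup (hbdd.mono hsub) hm')

theorem infDist_connectedComponentIn_compl_ball (ρ x : E) :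
    infDist ρ (connectedComponentIn (ball ρ (dist ρ x))ᶜ x) = dist ρ x := by
  have hx : x ∈ (ball ρ (dist ρ x))ᶜ := by simp [dist_comm]
  refine le_antisymm (infDist_le_dist_of_mem (mem_connectedComponentIn hx)) ?_
  refine (le_infDist ⟨x, mem_connectedComponentIn hx⟩).2 fun w hw => ?_
  simpa [dist_comm] using connectedComponentIn_subset _ _ hw

theorem exists_connectedComponentIn_compl_ball_eq [CompactSpace E] {ρ z : E} {r : ℝ}
    (hz : z ∈ (ball ρ r)ᶜ) :
    ∃ x, connectedComponentIn (ball ρ (dist ρ x))ᶜ x = connectedComponentIn (ball ρ r)ᶜ z := by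
  have hdist : Continuous (dist ρ) := continuous_const.dist continuous_id
  obtain ⟨x, hxC, hmin⟩ :=
    (isOpen_ball.isClosed_compl.connectedComponentIn z).isCompact.exists_isMinOn
      ⟨z, mem_connectedComponentIn hz⟩ hdist.continuousOn
  have hCx : connectedComponentIn (ball ρ r)ᶜ z ⊆ (ball ρ (dist ρ x))ᶜ := fun w hw => by
    simpa [dist_comm] using hmin hw
  have hrx : r ≤ dist ρ x := by simpa [dist_comm] using connectedComponentIn_subset _ _ hxC
  refine ⟨x, Subset.antisymm ?_ (isPreconnected_connectedComponentIn.subset_connectedComponentIn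
    hxC hCx)⟩
  rw [connectedComponentIn_eq hxC]
  exact connectedComponentIn_mono x (compl_subset_compl.2 (ball_subset_ball hrx))

end Cactus

/-- The space `Kac'(E)` of connected components of complements of open balls centered at
`ρ`, with `d_Kac'(C, C') = h(C) + h(C') - 2 h(C ∧ C')` where `h(C) = d(ρ, C)`, is isometric
to `Kac(E)` via the map sending `x` to the component `C_x` of `B(ρ, d(ρ,x))ᶜ` containing
`x`: that map is onto `Kac'(E)` and sends `d_Kac` to `d_Kac'`. -/
theorem stmt13 {E : Type*} [MetricSpace E] [CompactSpace E]
    (hgeo : IsGeodesicSpace E) (ρ : E) :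
    (∀ x y : E,
      Metric.infDist ρ (connectedComponentIn (Metric.ball ρ (dist ρ x))ᶜ x) +
        Metric.infDist ρ (connectedComponentIn (Metric.ball ρ (dist ρ y))ᶜ y) -
        2 * hMeet ρ x y = dKac ρ x y) ∧
    (∀ r : ℝ, 0 ≤ r → ∀ z ∈ (Metric.ball ρ r)ᶜ,
      ∃ x : E, connectedComponentIn (Metric.ball ρ (dist ρ x))ᶜ x =
        connectedComponentIn (Metric.ball ρ r)ᶜ z) := by
  refine ⟨fun x y => ?_, fun r _ z hz => exists_connectedComponentIn_compl_ball_eq hz⟩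
  rw [infDist_connectedComponentIn_compl_ball, infDist_connectedComponentIn_compl_ball,
    hMeet_eq_sSup_curveInfDists hgeo]
  rfl
end
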